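/- arXiv:1504.07164 — 5 statements merged into one kernel-verified Lean document; each statement's English description precedes it below -/
import Mathlib

section
/- Let R be a commutative domain and let f₁,…,f_m, g₁,…,g_{m'} be a sequence of elements of R that is a regular sequence in every order. If P ∈ R[x₁,…,x_m] is a homogeneous polynomial of degree k such that P(f₁,…,f_m) lies in the ideal generated by g₁,…,g_{m'}, then there exists a homogeneous polynomial Q ∈ R[x₁,…,x_m] of degree k, all of whose coefficients lie in the ideal generated by g₁,…,g_{m'}, with P(f₁,…,f_m) = Q(f₁,…,f_m). -/
/-!
Write `I = (f₁, …, f_m)` and `J = (g₁, …, g_{m'})`. A homogeneous polynomial of degree `k`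
evaluates at `f` into `I ^ k`, and conversely every element of `J * I ^ k` is the value at `f`
of a homogeneous polynomial of degree `k` with coefficients in `J`. So it suffices to show
`J ⊓ I ^ k ≤ J * I ^ k`. This goes by induction on `k + m`: splitting off `f₁` writes
`x ∈ J ⊓ I ^ (k + 1)` as `u + f₁ w` with `u ∈ J * I ^ (k + 1)` (induction, with `f₁` moved
among the `g`'s) and `w ∈ I ^ k`; then `f₁ w ∈ J`, and since `f₁` is a nonzerodivisor modulo
`J` we get `w ∈ J ⊓ I ^ k ≤ J * I ^ k` by induction again.
-/

open Ideal RingTheory.Sequence MvPolynomial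

namespace Ideal

variable {R : Type*} [CommRing R]

theorem ofList_ofFn {n : ℕ} (f : Fin n → R) : ofList (List.ofFn f) = span (Set.range f) :=
  congrArg span (Set.ext fun r => List.mem_ofFn' f r)

theorem mem_sup_span_singleton_mul {I J : Ideal R} {a x : R} :
    x ∈ I ⊔ span {a} * J ↔ ∃ y ∈ I, ∃ z ∈ J, y + a * z = x := by
  simp only [Submodule.mem_sup, mem_span_singleton_mul]
  constructor
  · rintro ⟨y, hy, _, ⟨z, hz, rfl⟩, rfl⟩
    exact ⟨y, hy, z, hz, rfl⟩
  · rintro ⟨y, hy, z, hz, rfl⟩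
    exact ⟨y, hy, _, ⟨z, hz, rfl⟩, rfl⟩

theorem sup_pow_succ_le (I J : Ideal R) (k : ℕ) :
    (I ⊔ J) ^ (k + 1) ≤ J ^ (k + 1) ⊔ I * (I ⊔ J) ^ k := by
  induction k with
  | zero => simp [sup_comm]
  | succ k ih =>
    calc (I ⊔ J) ^ (k + 2) = (I ⊔ J) ^ (k + 1) * (I ⊔ J) := pow_succ _ _
    _ ≤ (J ^ (k + 1) ⊔ I * (I ⊔ J) ^ k) * (I ⊔ J) := mul_mono_left ih
    _ = J ^ (k + 1) * I ⊔ J ^ (k + 1) * J ⊔ I * (I ⊔ J) ^ k * (I ⊔ J) := by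
        rw [sup_mul, mul_sup]
    _ ≤ J ^ (k + 2) ⊔ I * (I ⊔ J) ^ (k + 1) := by
        refine sup_le (sup_le ?_ ?_) ?_
        · rw [mul_comm]
          exact le_sup_of_le_right (mul_mono_right (pow_right_mono le_sup_right _))
        · rw [← pow_succ]
          exact le_sup_left
        · rw [mul_assoc, ← pow_succ]
          exact le_sup_right

end Ideal

namespace RingTheory.Sequence.IsWeaklyRegular

variable {R : Type*} [CommRing R]

theorem mem_ofList_of_mul_mem {rs rest : List R} {a w : R}
    (h : IsWeaklyRegular R (rs ++ a :: rest)) (hw : a * w ∈ ofList rs) : w ∈ ofList rs := by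
  rw [isWeaklyRegular_append_iff, isWeaklyRegular_cons_iff] at h
  have hJ : (ofList rs • ⊤ : Submodule R R) = ofList rs := by rw [smul_eq_mul, mul_top]
  have hmk : a • Submodule.Quotient.mk (p := (ofList rs • ⊤ : Submodule R R)) w =
      a • (0 : R ⧸ (ofList rs • ⊤ : Submodule R R)) := by
    rwa [smul_zero, ← Submodule.Quotient.mk_smul, Submodule.Quotient.mk_eq_zero, hJ]
  simpa only [Submodule.Quotient.mk_eq_zero, hJ] using h.2.1 hmk

end RingTheory.Sequence.IsWeaklyRegular

theorem Ideal.ofList_inf_pow_le_mul_pow {R : Type*} [CommRing R] (fs gs : List R)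
    (hreg : ∀ l : List R, l.Perm (fs ++ gs) → IsWeaklyRegular R l) (k : ℕ) :
    ofList gs ⊓ ofList fs ^ k ≤ ofList gs * ofList fs ^ k := by
  match k, fs with
  | 0, _ => simp
  | k + 1, [] => simp
  | k + 1, a :: fs =>
    intro x hx
    obtain ⟨hxJ, hxI⟩ := mem_inf.1 hx
    set J := ofList gs
    set I := ofList fs
    simp only [ofList_cons] at hxI ⊢
    obtain ⟨y, hyI, z, hz, rfl⟩ := mem_sup_span_singleton_mul.1 (sup_pow_succ_le _ I k hxI)
    have hyJ : y ∈ J ⊔ span {a} := by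
      rw [← add_sub_cancel_right y (a * z)]
      exact sub_mem (mem_sup_left hxJ)
        (mem_sup_right (mul_mem_right z _ (mem_span_singleton_self a)))
    have hperm : (fs ++ (gs ++ [a])).Perm (a :: fs ++ gs) :=
      (List.perm_append_comm.append_left fs).trans List.perm_middle
    have hy : y ∈ (J ⊔ span {a}) * I ^ (k + 1) := by
      rw [← ofList_singleton, ← ofList_append]
      refine ofList_inf_pow_le_mul_pow fs (gs ++ [a]) (fun l hl => hreg l (hl.trans hperm)) (k + 1)
        (mem_inf.2 ⟨?_, hyI⟩)
      rwa [ofList_append, ofList_singleton]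
    rw [Ideal.sup_mul] at hy
    obtain ⟨u, hu, v, hv, rfl⟩ := mem_sup_span_singleton_mul.1 hy
    have hwJ : v + z ∈ J := by
      refine (hreg _ List.perm_append_comm).mem_ofList_of_mul_mem ?_
      rw [show a * (v + z) = u + a * v + a * z - u by ring]
      exact sub_mem hxJ (Ideal.mul_le_left hu)
    have hwI : v + z ∈ (span {a} ⊔ I) ^ k :=
      add_mem (Ideal.pow_le_pow_right k.le_succ (Ideal.pow_right_mono le_sup_right _ hv)) hz
    have hw :=
      ofList_inf_pow_le_mul_pow (a :: fs) gs hreg k (mem_inf.2 ⟨hwJ, by rwa [ofList_cons]⟩)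
    rw [ofList_cons] at hw
    rw [add_assoc, ← mul_add]
    refine add_mem (Ideal.mul_mono_right (Ideal.pow_right_mono le_sup_right _) hu) ?_
    have hle : span {a} * (J * (span {a} ⊔ I) ^ k) ≤ J * (span {a} ⊔ I) ^ (k + 1) := by
      rw [mul_left_comm, pow_succ']
      exact Ideal.mul_mono_right (Ideal.mul_mono_left le_sup_left)
    exact hle (mul_mem_mul (mem_span_singleton_self a) hw)
termination_by k + fs.length

namespace MvPolynomial

variable {σ R : Type*} [CommRing R] (f : σ → R)

theorem IsHomogeneous.eval_mem_span_range_pow {P : MvPolynomial σ R} {k : ℕ}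
    (hP : P.IsHomogeneous k) : eval f P ∈ span (Set.range f) ^ k := by
  rw [eval_eq]
  refine sum_mem fun d hd => mul_mem_left _ _ ?_
  have hdeg : ∑ i ∈ d.support, d i = k := by
    simpa [Finsupp.weight_apply, Finsupp.sum] using hP (mem_support_iff.mp hd)
  rw [← hdeg, ← Finset.prod_pow_eq_pow_sum]
  exact prod_mem_prod fun i _ => pow_mem_pow (subset_span (Set.mem_range_self i)) _

theorem exists_isHomogeneous_eval_eq_of_mem_span_range_pow {k : ℕ} {x : R}
    (hx : x ∈ span (Set.range f) ^ k) :
    ∃ P : MvPolynomial σ R, P.IsHomogeneous k ∧ eval f P = x := by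
  suffices span (Set.range f) ^ k ≤ (homogeneousSubmodule σ R k).map (aeval f).toLinearMap by
    obtain ⟨P, hP, rfl⟩ := this hx
    exact ⟨P, hP, by simp⟩
  clear hx
  induction k with
  | zero =>
    rintro x -
    exact ⟨C x, isHomogeneous_C σ x, by simp⟩
  | succ k ih =>
    have hdeg_one :
        span (Set.range f) ≤ (homogeneousSubmodule σ R 1).map (aeval f).toLinearMap :=
      span_le.2 fun _ ⟨i, hi⟩ => ⟨X i, isHomogeneous_X R i, by simp [hi]⟩
    rw [pow_succ, Submodule.mul_le]
    intro a ha b hb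
    obtain ⟨A, hA, rfl⟩ := ih ha
    obtain ⟨B, hB, rfl⟩ := hdeg_one hb
    exact ⟨A * B, hA.mul hB, by simp⟩

theorem exists_isHomogeneous_coeff_mem_eval_eq {J : Ideal R} {k : ℕ} {x : R}
    (hx : x ∈ J * span (Set.range f) ^ k) :
    ∃ Q : MvPolynomial σ R, Q.IsHomogeneous k ∧ (∀ e, coeff e Q ∈ J) ∧ eval f Q = x := by
  refine Submodule.mul_induction_on hx ?_ ?_
  · intro a ha c hc
    obtain ⟨B, hB, rfl⟩ := exists_isHomogeneous_eval_eq_of_mem_span_range_pow f hc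
    refine ⟨C a * B, by simpa using (isHomogeneous_C σ a).mul hB, fun e => ?_, by simp⟩
    rw [coeff_C_mul]
    exact mul_mem_right _ _ ha
  · rintro x y ⟨Q₁, hQ₁, hc₁, rfl⟩ ⟨Q₂, hQ₂, hc₂, rfl⟩
    refine ⟨Q₁ + Q₂, hQ₁.add hQ₂, fun e => ?_, by simp⟩
    simpa only [coeff_add] using add_mem (hc₁ e) (hc₂ e)

end MvPolynomial

theorem stmt_0_general {R : Type*} [CommRing R] {m m' k : ℕ}
    (f : Fin m → R) (g : Fin m' → R)
    (hreg : ∀ l : List R, l.Perm (List.ofFn f ++ List.ofFn g) →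
      RingTheory.Sequence.IsRegular R l)
    (P : MvPolynomial (Fin m) R) (hP : P.IsHomogeneous k)
    (hPf : MvPolynomial.eval f P ∈ Ideal.span (Set.range g)) :
    ∃ Q : MvPolynomial (Fin m) R, Q.IsHomogeneous k ∧
      (∀ e, MvPolynomial.coeff e Q ∈ Ideal.span (Set.range g)) ∧
      MvPolynomial.eval f P = MvPolynomial.eval f Q := by
  have hinf := ofList_inf_pow_le_mul_pow _ _ (fun l hl => (hreg l hl).toIsWeaklyRegular) k
  rw [ofList_ofFn, ofList_ofFn] at hinf
  obtain ⟨Q, hQ, hcoeff, hQf⟩ := exists_isHomogeneous_coeff_mem_eval_eq f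
    (hinf (mem_inf.2 ⟨hPf, hP.eval_mem_span_range_pow f⟩))
  exact ⟨Q, hQ, hcoeff, hQf.symm⟩

/-- Let `R` be a commutative domain and `f₁,…,f_m, g₁,…,g_{m'}` a
sequence of elements of `R` that is a regular sequence in every order.  If
`P ∈ R[x₁,…,x_m]` is homogeneous of degree `k` and `P(f₁,…,f_m)` lies in the ideal
generated by the `gⱼ`, then there is a homogeneous polynomial `Q` of degree `k` all of
whose coefficients lie in `(g₁,…,g_{m'})` with `P(f) = Q(f)`. -/
theorem stmt_0 {R : Type*} [CommRing R] [IsDomain R] {m m' k : ℕ}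
    (f : Fin m → R) (g : Fin m' → R)
    (hreg : ∀ l : List R, l.Perm (List.ofFn f ++ List.ofFn g) →
      RingTheory.Sequence.IsRegular R l)
    (P : MvPolynomial (Fin m) R) (hP : P.IsHomogeneous k)
    (hPf : MvPolynomial.eval f P ∈ Ideal.span (Set.range g)) :
    ∃ Q : MvPolynomial (Fin m) R, Q.IsHomogeneous k ∧
      (∀ e, MvPolynomial.coeff e Q ∈ Ideal.span (Set.range g)) ∧
      MvPolynomial.eval f P = MvPolynomial.eval f Q :=
  stmt_0_general f g hreg P hP hPf
end

section
/- Let R be a commutative ring, f ∈ R, u ∈ R a unit, and E a derivation of R with E(f) = f such that u + E(u) is a unit. Then the map δ ↦ δ − (δ(u)/(u + E(u)))·E is an R-module isomorphism from {derivations δ with δ(f) = 0} onto {derivations δ' with δ'(uf) = 0}. -/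
/-!
The correction `Φ δ = δ - (δ u · (u + E u)⁻¹) • E` satisfies `(Φ δ)(u f) = u · δ f` because
`E (u f) = (u + E u) f`, so `Φ` carries `{δ f = 0}` onto `{δ (u f) = 0}` as soon as `Φ` is invertible.
Corrections `δ ↦ δ - (δ c · a) • E` along a fixed `c` compose to the identity when
`a + b = a b · E c`, and this holds for `a = (u + E u)⁻¹`, `b = -u⁻¹`, `c = u`.
-/

/-- Evaluation of a derivation at a fixed ring element, as an `R`-linear map on the
module of derivations.  Its kernel is `Der(−log₀ f) = {δ : δ f = 0}`. -/
def derEvalAt {R : Type*} [CommRing R] (f : R) : Derivation ℤ R R →ₗ[R] R where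
  toFun δ := δ f
  map_add' := by intro δ₁ δ₂; simp
  map_smul' := by intro r δ; simp

theorem Ring.inverse_add_neg_inverse_eq {R : Type*} [CommRing R] {u e : R} (hu : IsUnit u)
    (hue : IsUnit (u + e)) :
    Ring.inverse (u + e) + -Ring.inverse u = Ring.inverse (u + e) * -Ring.inverse u * e := by
  linear_combination -Ring.inverse (u + e) * Ring.mul_inverse_cancel u hu +
    Ring.inverse u * Ring.mul_inverse_cancel _ hue

namespace Derivation

variable {A R : Type*} [CommRing A] [CommRing R] [Algebra A R]

def correction (c a : R) (E : Derivation A R R) : Derivation A R R →ₗ[R] Derivation A R R where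
  toFun δ := δ - (δ c * a) • E
  map_add' δ₁ δ₂ := by
    ext x
    simp only [add_apply, sub_apply, smul_apply, smul_eq_mul]
    ring
  map_smul' r δ := by
    ext x
    simp only [smul_apply, sub_apply, smul_eq_mul, RingHom.id_apply]
    ring

variable (c a b : R) (E δ : Derivation A R R)

theorem correction_apply_apply (x : R) : correction c a E δ x = δ x - δ c * a * E x := rfl

theorem correction_comp_correction (h : a + b = a * b * E c) :
    correction c b E ∘ₗ correction c a E = LinearMap.id := by
  ext δ x
  simp only [LinearMap.comp_apply, LinearMap.id_apply, correction_apply_apply]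
  linear_combination -(δ c * E x) * h

def correctionEquiv (h : a + b = a * b * E c) : Derivation A R R ≃ₗ[R] Derivation A R R :=
  LinearEquiv.ofLinearMap (correction c a E) (correction c b E)
    (correction_comp_correction c b a E (by rw [add_comm, mul_comm b, h]))
    (correction_comp_correction c a b E h)

theorem correction_apply_mul_of_apply_eq_self {u f : R} (hE : E f = f) (huE : IsUnit (u + E u)) :
    correction u (Ring.inverse (u + E u)) E δ (u * f) = u * δ f := by
  rw [correction_apply_apply, leibniz, leibniz, hE, smul_eq_mul, smul_eq_mul, smul_eq_mul,
    smul_eq_mul]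
  linear_combination -(δ u * f) * Ring.mul_inverse_cancel _ huE

end Derivation

open Derivation in
theorem comap_correction_ker_derEvalAt_mul {R : Type*} [CommRing R] {f u : R} (hu : IsUnit u)
    (E : Derivation ℤ R R) (hE : E f = f) (huE : IsUnit (u + E u)) :
    (LinearMap.ker (derEvalAt (u * f))).comap (correction u (Ring.inverse (u + E u)) E) =
      LinearMap.ker (derEvalAt f) := by
  ext δ
  simp only [Submodule.mem_comap, LinearMap.mem_ker, derEvalAt, LinearMap.coe_mk, AddHom.coe_mk,
    correction_apply_mul_of_apply_eq_self E δ hE huE, hu.mul_right_eq_zero]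

open Derivation in
/-- Let `R` be a commutative ring, `f ∈ R`, `u` a unit, and `E` a
derivation with `E f = f` such that `u + E u` is a unit.  Then
`δ ↦ δ − (δ u · (u + E u)⁻¹) • E` is an `R`-module isomorphism
`{δ : δ f = 0} ≃ {δ' : δ' (u f) = 0}`. -/
theorem stmt_4 {R : Type*} [CommRing R] (f u : R) (hu : IsUnit u)
    (E : Derivation ℤ R R) (hE : E f = f) (huE : IsUnit (u + E u)) :
    ∃ Φ : ↥(LinearMap.ker (derEvalAt f)) ≃ₗ[R] ↥(LinearMap.ker (derEvalAt (u * f))),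
      ∀ δ : ↥(LinearMap.ker (derEvalAt f)),
        (Φ δ : Derivation ℤ R R) =
          (δ : Derivation ℤ R R) -
            ((δ : Derivation ℤ R R) u * Ring.inverse (u + E u)) • E := by
  let Φ := correctionEquiv u _ _ E (Ring.inverse_add_neg_inverse_eq hu huE)
  refine ⟨Φ.ofSubmodules _ _ ?_, fun _ => rfl⟩
  rw [← comap_correction_ker_derEvalAt_mul hu E hE huE]
  exact Submodule.map_comap_eq_of_surjective Φ.surjective _
end

section
/- Let δ = xᵀB∂ (where B ∈ ℂ^{n×n}) be a degree-zero derivation on ℂ[x₁,…,xₙ] with δ(f) = 0 for f = ∏ L_k a product of linear forms spanning the dual space. Then each L_k is an eigenvector of the action of B on the space of linear forms (δ(L_k) = γ_k L_k for some γ_k ∈ ℂ), and B is diagonalizable. -/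
open scoped BigOperators

/-- The linear form with coefficient vector `v`. -/
noncomputable def linearForm {n : ℕ} (v : Fin n → ℂ) : MvPolynomial (Fin n) ℂ :=
  ∑ j, MvPolynomial.C (v j) * MvPolynomial.X j

/-- The defining polynomial `∏ᵢ Lᵢ` of a central hyperplane arrangement. -/
noncomputable def arrPoly {n d : ℕ} (c : Fin d → Fin n → ℂ) : MvPolynomial (Fin n) ℂ :=
  ∏ i, linearForm (c i)

/-!
Since the linear forms `Lₖ` are prime in `ℂ[x₁,…,xₙ]`, a derivation `δ` killing
`f = Lₖ^(e+1) g` (with `Lₖ ∤ g`) satisfies `0 = δ f = Lₖ^e ((e+1) g δLₖ + Lₖ δg)`, so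
`Lₖ ∣ δLₖ`. As `δ` preserves degree, `δLₖ` is a linear form and hence a scalar multiple of `Lₖ`;
for `δ = xᵀB∂` this says that the coefficient vector of `Lₖ` is an eigenvector of `B`. The
`Lₖ` span the dual space, so `B` has a basis of eigenvectors.
-/

open MvPolynomial

theorem Derivation.prime_dvd_apply_self_of_dvd_of_apply_eq_zero {R A : Type*} [CommSemiring R]
    [CommRing A] [IsDomain A] [WfDvdMonoid A] [Algebra R A] [Algebra ℚ A]
    (D : Derivation R A A) {p a : A} (hp : Prime p) (ha : a ≠ 0) (hpa : p ∣ a) (hDa : D a = 0) :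
    p ∣ D p := by
  obtain ⟨m, g, hpg, rfl⟩ := WfDvdMonoid.max_power_factor' ha hp.not_isUnit
  obtain ⟨e, rfl⟩ : ∃ e, m = e + 1 := Nat.exists_eq_add_one.mpr <| Nat.pos_of_ne_zero <| by
    rintro rfl
    exact hpg (by simpa using hpa)
  have hsplit : p ^ e * (p * D g + ((e + 1 : ℕ) : A) * g * D p) = 0 := by
    rw [← hDa, Derivation.leibniz, Derivation.leibniz_pow]
    simp only [smul_eq_mul, nsmul_eq_mul, Nat.add_sub_cancel]
    ring
  have hzero := (mul_eq_zero.mp hsplit).resolve_left (pow_ne_zero _ hp.ne_zero)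
  have hdvd : p ∣ ((e + 1 : ℕ) : A) * g * D p :=
    (dvd_add_right (dvd_mul_right p _)).mp (hzero ▸ dvd_zero p)
  have hunit : IsUnit ((e + 1 : ℕ) : A) := by
    simpa using (IsUnit.mk0 ((e + 1 : ℕ) : ℚ) (by positivity)).map (algebraMap ℚ A)
  rw [mul_assoc, hunit.dvd_mul_left] at hdvd
  exact (hp.dvd_or_dvd hdvd).resolve_left hpg

theorem Matrix.mul_basis_toMatrix_eq_mul_diagonal {R n : Type*} [CommRing R] [Fintype n]
    [DecidableEq n] (A : Matrix n n R) (b : Module.Basis n R (n → R)) (γ : n → R)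
    (hb : ∀ j, A.mulVec (b j) = γ j • b j) :
    A * (Pi.basisFun R n).toMatrix b = (Pi.basisFun R n).toMatrix b * diagonal γ := by
  ext i j
  have hcol : ∀ i j, (Pi.basisFun R n).toMatrix b i j = b j i := by
    simp [Module.Basis.toMatrix_apply]
  rw [mul_diagonal, hcol, mul_apply, mul_comm]
  simpa [hcol, mulVec, dotProduct] using congrFun (hb j) i

theorem Matrix.exists_eq_mul_diagonal_mul_inv_of_span_eigenvectors {K n ι : Type*} [Field K]
    [Fintype n] [DecidableEq n] (A : Matrix n n K) (v : ι → n → K)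
    (hv : Submodule.span K (Set.range v) = ⊤) (hA : ∀ i, ∃ γ : K, A.mulVec (v i) = γ • v i) :
    ∃ (P : Matrix n n K) (D : n → K), IsUnit P.det ∧ A = P * diagonal D * P⁻¹ := by
  let b₀ := Module.Basis.ofSpan hv.ge
  let b := b₀.reindex (b₀.indexEquiv (Pi.basisFun K n))
  have hb : ∀ j, ∃ γ : K, A.mulVec (b j) = γ • b j := fun j => by
    obtain ⟨i, hi⟩ := Module.Basis.ofSpan_subset hv.ge
      (Set.mem_range_self ((b₀.indexEquiv (Pi.basisFun K n)).symm j))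
    rw [Module.Basis.reindex_apply, ← hi]
    exact hA i
  choose γ hγ using hb
  let P := (Pi.basisFun K n).toMatrix b
  have hP : IsUnit P.det := by
    let := (Pi.basisFun K n).invertibleToMatrix b
    exact isUnit_det_of_invertible P
  refine ⟨P, γ, hP, ?_⟩
  rw [← mul_basis_toMatrix_eq_mul_diagonal A b γ hγ, Matrix.mul_assoc, mul_nonsing_inv P hP,
    Matrix.mul_one]

/-- The derivation `xᵀ B ∂ = ∑ᵢ ∑ⱼ xᵢ bᵢⱼ ∂ⱼ`. -/
noncomputable def MvPolynomial.linearVectorField {σ R : Type*} [Fintype σ] [CommSemiring R]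
    (B : Matrix σ σ R) : Derivation R (MvPolynomial σ R) (MvPolynomial σ R) :=
  ∑ i, ∑ j, (X i * C (B i j)) • pderiv j

theorem MvPolynomial.linearVectorField_apply {σ R : Type*} [Fintype σ] [CommSemiring R]
    (B : Matrix σ σ R) (p : MvPolynomial σ R) :
    linearVectorField B p = ∑ i, ∑ j, X i * (C (B i j) * pderiv j p) := by
  rw [linearVectorField, ← Derivation.coeFnAddMonoidHom_apply]
  simp only [map_sum, Finset.sum_apply, Derivation.coeFnAddMonoidHom_apply,
    Derivation.smul_apply, smul_eq_mul, mul_assoc]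

section LinearForm

variable {n : ℕ}

theorem linearForm_smul (t : ℂ) (v : Fin n → ℂ) : linearForm (t • v) = C t * linearForm v := by
  simp [linearForm, Finset.mul_sum, mul_assoc]

theorem coeff_single_linearForm (v : Fin n → ℂ) (j : Fin n) :
    coeff (Finsupp.single j 1) (linearForm v) = v j := by
  simp [linearForm, coeff_sum, coeff_C_mul, coeff_X, Finsupp.single_left_inj]

theorem linearForm_injective : Function.Injective (linearForm (n := n)) := fun v w h =>
  funext fun j => by rw [← coeff_single_linearForm v j, h, coeff_single_linearForm]

theorem linearForm_zero : linearForm (0 : Fin n → ℂ) = 0 := by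
  simp [linearForm]

theorem linearForm_ne_zero {v : Fin n → ℂ} (hv : v ≠ 0) : linearForm v ≠ 0 :=
  fun h => hv (linearForm_injective (h.trans linearForm_zero.symm))

theorem isHomogeneous_linearForm (v : Fin n → ℂ) : (linearForm v).IsHomogeneous 1 :=
  IsHomogeneous.sum _ _ _ fun j _ => isHomogeneous_C_mul_X (v j) j

theorem totalDegree_linearForm {v : Fin n → ℂ} (hv : v ≠ 0) : (linearForm v).totalDegree = 1 :=
  (isHomogeneous_linearForm v).totalDegree (linearForm_ne_zero hv)

theorem prime_linearForm {v : Fin n → ℂ} (hv : v ≠ 0) : Prime (linearForm v) := by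
  refine (irreducible_of_totalDegree_eq_one (totalDegree_linearForm hv) fun x hx => ?_).prime
  obtain ⟨j, hj⟩ := Function.ne_iff.mp hv
  refine isUnit_iff_ne_zero.mpr fun hx0 => hj ?_
  simpa [hx0, coeff_single_linearForm] using hx (Finsupp.single j 1)

theorem exists_eq_smul_of_linearForm_dvd {v w : Fin n → ℂ} (hv : v ≠ 0)
    (h : linearForm v ∣ linearForm w) : ∃ γ : ℂ, w = γ • v := by
  rcases eq_or_ne w 0 with rfl | hw
  · exact ⟨0, (zero_smul ℂ v).symm⟩
  obtain ⟨q, hq⟩ := h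
  have hq0 : q ≠ 0 := by
    rintro rfl
    exact linearForm_ne_zero hw (by rw [hq, mul_zero])
  have hdeg : q.totalDegree = 0 := by
    have := congrArg totalDegree hq
    rw [totalDegree_mul_of_isDomain (linearForm_ne_zero hv) hq0, totalDegree_linearForm hv,
      totalDegree_linearForm hw] at this
    omega
  refine ⟨q.coeff 0, linearForm_injective ?_⟩
  rw [hq, linearForm_smul, ← totalDegree_eq_zero_iff_eq_C.mp hdeg, mul_comm]

theorem pderiv_linearForm (v : Fin n → ℂ) (j : Fin n) : pderiv j (linearForm v) = C (v j) := by
  simp [linearForm, pderiv_X, Pi.single_apply, mul_ite]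

theorem linearVectorField_linearForm (B : Matrix (Fin n) (Fin n) ℂ) (v : Fin n → ℂ) :
    linearVectorField B (linearForm v) = linearForm (B.mulVec v) := by
  simp only [linearVectorField_apply, pderiv_linearForm]
  simp only [linearForm, Matrix.mulVec, dotProduct, map_sum, map_mul, Finset.sum_mul]
  exact Finset.sum_congr rfl fun i _ => Finset.sum_congr rfl fun j _ => by ring

theorem linearForm_dvd_arrPoly {d : ℕ} (c : Fin d → Fin n → ℂ) (k : Fin d) :
    linearForm (c k) ∣ arrPoly c :=
  Finset.dvd_prod_of_mem _ (Finset.mem_univ k)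

theorem arrPoly_ne_zero {d : ℕ} {c : Fin d → Fin n → ℂ} (hc : ∀ k, c k ≠ 0) : arrPoly c ≠ 0 :=
  Finset.prod_ne_zero_iff.mpr fun k _ => linearForm_ne_zero (hc k)

theorem exists_mulVec_eq_smul_of_linearVectorField_arrPoly {d : ℕ} {c : Fin d → Fin n → ℂ}
    (hc : ∀ k, c k ≠ 0) {B : Matrix (Fin n) (Fin n) ℂ}
    (hB : linearVectorField B (arrPoly c) = 0) (k : Fin d) :
    ∃ γ : ℂ, B.mulVec (c k) = γ • c k := by
  refine exists_eq_smul_of_linearForm_dvd (hc k) ?_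
  rw [← linearVectorField_linearForm]
  exact (linearVectorField B).prime_dvd_apply_self_of_dvd_of_apply_eq_zero
    (prime_linearForm (hc k)) (arrPoly_ne_zero hc) (linearForm_dvd_arrPoly c k) hB

end LinearForm

/-- Let `δ = xᵀB∂ = Σᵢⱼ xᵢ bᵢⱼ ∂ⱼ` be a degree-zero derivation with
`δ f = 0`, where `f = ∏ L_k` is a product of linear forms spanning the dual space.
Then each `L_k` is an eigenvector of the induced action of `B` on linear forms, and
`B` is diagonalizable. -/
theorem stmt_7 {n d : ℕ} (c : Fin d → Fin n → ℂ) (hc : ∀ k, c k ≠ 0)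
    (hess : Submodule.span ℂ (Set.range c) = ⊤)
    (B : Matrix (Fin n) (Fin n) ℂ)
    (hδ : ∑ i, ∑ j, MvPolynomial.X i *
        (MvPolynomial.C (B i j) * MvPolynomial.pderiv j (arrPoly c)) = 0) :
    (∀ k, ∃ γ : ℂ, B.mulVec (c k) = γ • c k) ∧
      ∃ (P : Matrix (Fin n) (Fin n) ℂ) (D : Fin n → ℂ),
        IsUnit P.det ∧ B = P * Matrix.diagonal D * P⁻¹ := by
  have heig := exists_mulVec_eq_smul_of_linearVectorField_arrPoly hc
    ((linearVectorField_apply B (arrPoly c)).trans hδ)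
  exact ⟨heig, B.exists_eq_mul_diagonal_mul_inv_of_span_eigenvectors c hess heig⟩
end

section
/- Let R = ℂ[x₁,…,xₙ] and S = ℂ[z, x₁,…,xₙ], and let f ∈ R be homogeneous of degree d. Set F = (f − zᵈ)·z ∈ S. Then as a graded R-module, S/Jac(F) is free over R on the cosets of z⁰, z¹, …, z^{d−1}, and the R-annihilator of the coset of zⁱ (1 ≤ i ≤ d−1) is Jac(f), while the R-annihilator of the coset of z⁰ = 1 is f·Jac(f). -/
open scoped BigOperators
open Polynomial

/-- The Jacobian ideal of `F = (f − zᵈ)·z ∈ S = R[z]`, generated by `∂F/∂z` together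
with the `∂F/∂xᵢ = z·∂f/∂xᵢ`. -/
noncomputable def jacF {n : ℕ} (f : MvPolynomial (Fin n) ℂ) :
    Ideal (Polynomial (MvPolynomial (Fin n) ℂ)) :=
  Ideal.span ({Polynomial.derivative
      ((Polynomial.C f - Polynomial.X ^ (f.totalDegree)) * Polynomial.X)} ∪
    Set.range fun i : Fin n => Polynomial.X * Polynomial.C (MvPolynomial.pderiv i f))

/-- The Jacobian ideal of `f ∈ R = ℂ[x₁,…,xₙ]`. -/
noncomputable def jacf {n : ℕ} (f : MvPolynomial (Fin n) ℂ) :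
    Ideal (MvPolynomial (Fin n) ℂ) :=
  Ideal.span (Set.range fun i : Fin n => MvPolynomial.pderiv i f)

/-!
Put `g = ∂F/∂z = f - (d+1)zᵈ`. Modulo `Jac(F)` we have `z·Jac(f) = 0`, and Euler's identity
gives `f ∈ Jac(f)`; hence `zᵈ ≡ f/(d+1)` and `z^{d+1} ≡ 0`, so the cosets of `1, z, …, z^{d-1}`
generate. Conversely, for `k < d` the `R`-linear functional `p ↦ p_k + [k = 0]·f·p_d/(d+1)` maps
`Jac(F)` into `Jac(f)` when `k ≥ 1` and into `f·Jac(f)` when `k = 0`, as one checks on the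
`R`-module generators `zᵐ·g` and `z^{m+1}·∂ᵢf` of `Jac(F)`. It sends `r·zᵏ` plus any terms of
degrees other than `k` and `d` to `r`, which gives both the independence and the annihilators.
-/

theorem isUnit_natCast_of_ne_zero {A : Type*} [Semiring A] [Algebra ℚ A] {d : ℕ} (hd : d ≠ 0) :
    IsUnit (d : A) := by
  simpa using (Nat.cast_ne_zero.mpr hd : (d : ℚ) ≠ 0).isUnit.map (algebraMap ℚ A)

theorem Polynomial.ideal_span_restrictScalars_le {R : Type*} [CommSemiring R] {s : Set R[X]}
    {N : Submodule R R[X]} (h : ∀ g ∈ s, ∀ m : ℕ, X ^ m * g ∈ N) :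
    (Ideal.span s).restrictScalars R ≤ N := by
  have hX : Submodule.span R (Set.range (X ^ · : ℕ → R[X])) = ⊤ := by
    simpa [coe_basisMonomials, monomial_one_right_eq_X_pow] using (basisMonomials R).span_eq
  rw [Ideal.span, ← Submodule.span_smul_of_span_eq_top hX, Submodule.span_le]
  rintro _ ⟨_, ⟨m, rfl⟩, g, hg, rfl⟩
  exact h g hg m

theorem Polynomial.smul_quotientMk {R : Type*} [CommRing R] (I : Ideal R[X]) (r : R) (p : R[X]) :
    r • Ideal.Quotient.mk I p = Ideal.Quotient.mk I (C r * p) := by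
  rw [← smul_eq_C_mul]
  rfl

theorem Polynomial.derivative_C_sub_X_pow_mul_X {R : Type*} [CommRing R] (a : R) (d : ℕ) :
    derivative ((C a - X ^ d) * X) = C a - C ((d : R) + 1) * X ^ d := by
  rw [sub_mul, ← pow_succ, derivative_sub, derivative_C_mul_X, derivative_X_pow]
  simp

open MvPolynomial in
theorem mem_jacf_self {n d : ℕ} {f : MvPolynomial (Fin n) ℂ} (hf : f.IsHomogeneous d)
    (hd : d ≠ 0) : f ∈ jacf f := by
  have hsum : ∑ i, X i * pderiv i f ∈ jacf f :=
    Ideal.sum_mem _ fun i _ => Ideal.mul_mem_left _ _ (Ideal.subset_span ⟨i, rfl⟩)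
  rwa [hf.sum_X_mul_pderiv, nsmul_eq_mul,
    Ideal.unit_mul_mem_iff_mem _ (isUnit_natCast_of_ne_zero hd)] at hsum

theorem natCast_add_one_mul_inv_smul {K A : Type*} [Field K] [CharZero K] [Semiring A]
    [Algebra K A] (d : ℕ) (a : A) : ((d : A) + 1) * (((d : K) + 1)⁻¹ • a) = a := by
  have hcast : (d : A) + 1 = algebraMap K A ((d : K) + 1) := by simp
  rw [hcast, ← Algebra.smul_def, smul_smul, mul_inv_cancel₀ (Nat.cast_add_one_ne_zero d),
    one_smul]

section JacobianQuotient

variable {n d : ℕ} {f : MvPolynomial (Fin n) ℂ}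

local notation "R" => MvPolynomial (Fin n) ℂ

theorem isUnit_C_natCast_add_one (d : ℕ) : IsUnit (C ((d : R) + 1)) :=
  isUnit_C.mpr (by simpa using isUnit_natCast_of_ne_zero (A := R) d.succ_ne_zero)

theorem C_sub_mem_jacF (hdeg : f.totalDegree = d) :
    C f - C ((d : R) + 1) * X ^ d ∈ jacF f := by
  rw [← hdeg, ← derivative_C_sub_X_pow_mul_X]
  exact Ideal.subset_span (Or.inl rfl)

theorem X_mul_C_mem_jacF {s : R} (hs : s ∈ jacf f) : X * C s ∈ jacF f := by
  obtain ⟨c, rfl⟩ := Ideal.mem_span_range_iff_exists_fun.mp hs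
  simp only [map_sum, Finset.mul_sum, map_mul, mul_left_comm X]
  exact Ideal.sum_mem _ fun i _ => Ideal.mul_mem_left _ _ (Ideal.subset_span (Or.inr ⟨i, rfl⟩))

theorem C_mul_X_pow_mem_jacF {s : R} (hs : s ∈ jacf f) {k : ℕ} (hk : k ≠ 0) :
    C s * X ^ k ∈ jacF f := by
  obtain ⟨k, rfl⟩ := Nat.exists_eq_succ_of_ne_zero hk
  rw [show C s * X ^ (k + 1) = X * C s * X ^ k by ring]
  exact Ideal.mul_mem_right _ _ (X_mul_C_mem_jacF hs)

theorem C_mem_jacF (hdeg : f.totalDegree = d) (hd : d ≠ 0) {r : R}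
    (hr : r ∈ Ideal.span {f} * jacf f) : C r ∈ jacF f := by
  suffices Ideal.span {f} * jacf f ≤ (jacF f).comap C from this hr
  refine Ideal.span_singleton_mul_le_iff.mpr fun s hs => ?_
  rw [Ideal.mem_comap, map_mul, show C f * C s = (C f - C ((d : R) + 1) * X ^ d) * C s
    + C ((d : R) + 1) * (C s * X ^ d) by ring]
  exact add_mem (Ideal.mul_mem_right _ _ (C_sub_mem_jacF hdeg))
    (Ideal.mul_mem_left _ _ (C_mul_X_pow_mem_jacF hs hd))

theorem X_pow_succ_mem_jacF (hf : f.IsHomogeneous d) (hdeg : f.totalDegree = d) (hd : d ≠ 0) :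
    X ^ (d + 1) ∈ jacF f := by
  have hmem : C ((d : R) + 1) * X ^ (d + 1) ∈ jacF f := by
    rw [show C ((d : R) + 1) * X ^ (d + 1) = X * C f - X * (C f - C ((d : R) + 1) * X ^ d) by
      ring]
    exact sub_mem (X_mul_C_mem_jacF (mem_jacf_self hf hd))
      (Ideal.mul_mem_left _ _ (C_sub_mem_jacF hdeg))
  rwa [Ideal.unit_mul_mem_iff_mem _ (isUnit_C_natCast_add_one d)] at hmem

theorem mk_X_pow_eq_smul_mk_one (hdeg : f.totalDegree = d) :
    Ideal.Quotient.mk (jacF f) (X ^ d) =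
      (((d : ℂ) + 1)⁻¹ • f) • Ideal.Quotient.mk (jacF f) 1 := by
  rw [smul_quotientMk, mul_one, Ideal.Quotient.mk_eq_mk_iff_sub_mem,
    ← Ideal.unit_mul_mem_iff_mem _ (isUnit_C_natCast_add_one d), mul_sub, ← map_mul,
    natCast_add_one_mul_inv_smul, ← neg_sub, neg_mem_iff]
  exact C_sub_mem_jacF hdeg

noncomputable def jacAnn (f : R) (k : ℕ) : Ideal R :=
  if k = 0 then Ideal.span {f} * jacf f else jacf f

theorem C_mul_X_pow_mem_jacF_of_mem_jacAnn (hdeg : f.totalDegree = d) (hd : d ≠ 0) {k : ℕ}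
    {r : R} (hr : r ∈ jacAnn f k) : C r * X ^ k ∈ jacF f := by
  unfold jacAnn at hr
  split_ifs at hr with hk
  · rw [hk, pow_zero, mul_one]
    exact C_mem_jacF hdeg hd hr
  · exact C_mul_X_pow_mem_jacF hr hk

noncomputable def jacCoeff (f : R) (d k : ℕ) : R[X] →ₗ[R] R :=
  lcoeff R k + (if k = 0 then ((d : ℂ) + 1)⁻¹ • f else 0) • lcoeff R d

theorem jacCoeff_apply (k : ℕ) (p : R[X]) :
    jacCoeff f d k p = p.coeff k + (if k = 0 then ((d : ℂ) + 1)⁻¹ • f else 0) * p.coeff d :=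
  rfl

theorem jacCoeff_C_mul_X_pow_self {k : ℕ} (hk : k < d) (a : R) :
    jacCoeff f d k (C a * X ^ k) = a := by
  simp [jacCoeff_apply, coeff_C_mul, coeff_X_pow, hk.ne']

theorem jacCoeff_C_mul_X_pow_of_lt {k j : ℕ} (hk : k < d) (hj : d < j) (a : R) :
    jacCoeff f d k (C a * X ^ j) = 0 := by
  have hkj : k ≠ j := by omega
  simp [jacCoeff_apply, coeff_C_mul, coeff_X_pow, hkj, hj.ne]

theorem jacCoeff_C_mul_X_pow_mem {k j : ℕ} (hj : j ≠ 0) {a : R} (ha : a ∈ jacf f) :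
    jacCoeff f d k (C a * X ^ j) ∈ jacAnn f k := by
  rcases eq_or_ne k 0 with rfl | hk
  · have hval :
        jacCoeff f d 0 (C a * X ^ j) = if d = j then ((d : ℂ) + 1)⁻¹ • f * a else 0 := by
      simp [jacCoeff_apply, coeff_C_mul, coeff_X_pow, hj.symm]
    rw [hval, jacAnn, if_pos rfl]
    split_ifs
    · rw [smul_mul_assoc, ← mul_smul_comm]
      exact Ideal.mul_mem_mul (Ideal.mem_span_singleton_self f)
        (Submodule.smul_of_tower_mem _ _ ha)
    · exact zero_mem _
  · have hval : jacCoeff f d k (C a * X ^ j) = if k = j then a else 0 := by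
      simp [jacCoeff_apply, coeff_C_mul, coeff_X_pow, hk]
    rw [hval, jacAnn, if_neg hk]
    split_ifs
    exacts [ha, zero_mem _]

theorem jacCoeff_C_sub_X_pow {k : ℕ} (hk : k < d) :
    jacCoeff f d k (C f - C ((d : R) + 1) * X ^ d) = 0 := by
  simp only [jacCoeff_apply, coeff_sub, coeff_C_mul, coeff_C, coeff_X_pow, if_neg hk.ne]
  rcases eq_or_ne k 0 with rfl | hk0
  · simp only [if_true, if_neg hk.ne', mul_zero, sub_zero, mul_one, zero_sub]
    rw [mul_neg, mul_comm, natCast_add_one_mul_inv_smul, add_neg_cancel]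
  · simp [hk0]

theorem jacCoeff_mem_jacAnn (hf : f.IsHomogeneous d) (hdeg : f.totalDegree = d) {k : ℕ}
    (hk : k < d) {p : R[X]} (hp : p ∈ jacF f) : jacCoeff f d k p ∈ jacAnn f k := by
  refine Polynomial.ideal_span_restrictScalars_le
    (N := Submodule.comap (jacCoeff f d k) (jacAnn f k)) ?_ hp
  rintro g (rfl | ⟨i, rfl⟩) m
  · rw [derivative_C_sub_X_pow_mul_X, hdeg, Submodule.mem_comap]
    rcases eq_or_ne m 0 with rfl | hm
    · rw [pow_zero, one_mul, jacCoeff_C_sub_X_pow hk]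
      exact zero_mem _
    · rw [show X ^ m * (C f - C ((d : R) + 1) * X ^ d)
          = C f * X ^ m - C ((d : R) + 1) * X ^ (d + m) by ring, map_sub,
        jacCoeff_C_mul_X_pow_of_lt (j := d + m) hk (by omega), sub_zero]
      exact jacCoeff_C_mul_X_pow_mem hm (mem_jacf_self hf (by omega))
  · rw [Submodule.mem_comap, show X ^ m * (X * C (MvPolynomial.pderiv i f))
      = C (MvPolynomial.pderiv i f) * X ^ (m + 1) by ring]
    exact jacCoeff_C_mul_X_pow_mem m.succ_ne_zero (Ideal.subset_span ⟨i, rfl⟩)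

theorem annihilator_span_mk_X_pow (hf : f.IsHomogeneous d) (hdeg : f.totalDegree = d) {k : ℕ}
    (hk : k < d) :
    (Submodule.span R {Ideal.Quotient.mk (jacF f) (X ^ k)}).annihilator = jacAnn f k := by
  ext r
  rw [Submodule.mem_annihilator_span_singleton, smul_quotientMk, Ideal.Quotient.eq_zero_iff_mem]
  refine ⟨fun h => ?_, C_mul_X_pow_mem_jacF_of_mem_jacAnn hdeg (by omega)⟩
  simpa [jacCoeff_C_mul_X_pow_self hk] using jacCoeff_mem_jacAnn hf hdeg hk h

theorem iSupIndep_span_mk_X_pow (hf : f.IsHomogeneous d) (hdeg : f.totalDegree = d) :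
    iSupIndep fun i : Fin d => Submodule.span R {Ideal.Quotient.mk (jacF f) (X ^ (i : ℕ))} := by
  refine iSupIndep_def.mpr fun i => Submodule.disjoint_def.mpr fun x hxi hxo => ?_
  obtain ⟨r, rfl⟩ := Submodule.mem_span_singleton.mp hxi
  let U : Submodule R R[X] := LinearMap.ker (lcoeff R i) ⊓ LinearMap.ker (lcoeff R d)
  have hle : (⨆ (j : Fin d) (_ : j ≠ i),
      Submodule.span R {Ideal.Quotient.mk (jacF f) (X ^ (j : ℕ))}) ≤
      U.map (Ideal.Quotient.mkₐ R (jacF f)).toLinearMap := by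
    refine iSup₂_le fun j hj => Submodule.span_le.mpr ?_
    rintro _ rfl
    refine ⟨X ^ (j : ℕ), ⟨?_, ?_⟩, rfl⟩ <;>
      simp [coeff_X_pow, Fin.val_ne_of_ne hj.symm, j.isLt.ne']
  obtain ⟨q, ⟨hqi, hqd⟩, hq⟩ := hle hxo
  have hsub : C r * X ^ (i : ℕ) - q ∈ jacF f := by
    rw [← Ideal.Quotient.mk_eq_mk_iff_sub_mem, ← smul_quotientMk, ← hq]
    rfl
  have hq0 : jacCoeff f d i q = 0 := by
    rw [jacCoeff_apply, ← lcoeff_apply, ← lcoeff_apply, LinearMap.mem_ker.mp hqi,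
      LinearMap.mem_ker.mp hqd, mul_zero, add_zero]
  have hr := jacCoeff_mem_jacAnn hf hdeg i.isLt hsub
  rw [map_sub, jacCoeff_C_mul_X_pow_self i.isLt, hq0, sub_zero] at hr
  rw [smul_quotientMk, Ideal.Quotient.eq_zero_iff_mem]
  exact C_mul_X_pow_mem_jacF_of_mem_jacAnn hdeg i.pos.ne' hr

theorem iSup_span_mk_X_pow_eq_top (hf : f.IsHomogeneous d) (hdeg : f.totalDegree = d)
    (hd : 0 < d) :
    (⨆ i : Fin d, Submodule.span R {Ideal.Quotient.mk (jacF f) (X ^ (i : ℕ))}) = ⊤ := by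
  set M := ⨆ i : Fin d, Submodule.span R {Ideal.Quotient.mk (jacF f) (X ^ (i : ℕ))}
  have hmem : ∀ j < d, Ideal.Quotient.mk (jacF f) (X ^ j) ∈ M := fun j hj =>
    Submodule.mem_iSup_of_mem (⟨j, hj⟩ : Fin d) (Submodule.mem_span_singleton_self _)
  have hX : ∀ j, Ideal.Quotient.mk (jacF f) (X ^ j) ∈ M := by
    intro j
    rcases lt_trichotomy j d with hj | rfl | hj
    · exact hmem j hj
    · rw [mk_X_pow_eq_smul_mk_one hdeg, ← pow_zero X]
      exact M.smul_mem _ (hmem 0 hd)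
    · obtain ⟨e, rfl⟩ := Nat.exists_eq_add_of_lt hj
      rw [add_right_comm, pow_add, Ideal.Quotient.eq_zero_iff_mem.mpr
        (Ideal.mul_mem_right _ _ (X_pow_succ_mem_jacF hf hdeg hd.ne'))]
      exact M.zero_mem
  rw [eq_top_iff]
  rintro x -
  obtain ⟨p, rfl⟩ := Ideal.Quotient.mk_surjective x
  induction p using Polynomial.induction_on' with
  | add p q hp hq => rw [map_add]; exact M.add_mem hp hq
  | monomial j a =>
    rw [← C_mul_X_pow_eq_monomial, ← smul_quotientMk]
    exact M.smul_mem a (hX j)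

end JacobianQuotient

theorem stmt_9_general {n d : ℕ} (hd : 0 < d)
    (f : MvPolynomial (Fin n) ℂ) (hf : f.IsHomogeneous d) (hdeg : f.totalDegree = d) :
    (⨆ i : Fin d, Submodule.span (MvPolynomial (Fin n) ℂ)
        {Ideal.Quotient.mk (jacF f) (Polynomial.X ^ (i : ℕ))}) = ⊤ ∧
    iSupIndep (fun i : Fin d => Submodule.span (MvPolynomial (Fin n) ℂ)
        {Ideal.Quotient.mk (jacF f) (Polynomial.X ^ (i : ℕ))}) ∧
    (∀ i : Fin d, 1 ≤ (i : ℕ) →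
      (Submodule.span (MvPolynomial (Fin n) ℂ)
        {Ideal.Quotient.mk (jacF f) (Polynomial.X ^ (i : ℕ))}).annihilator = jacf f) ∧
    (Submodule.span (MvPolynomial (Fin n) ℂ)
        {Ideal.Quotient.mk (jacF f) (1 : Polynomial (MvPolynomial (Fin n) ℂ))}).annihilator
      = Ideal.span {f} * jacf f := by
  refine ⟨iSup_span_mk_X_pow_eq_top hf hdeg hd, iSupIndep_span_mk_X_pow hf hdeg,
    fun i hi => ?_, ?_⟩
  · rw [annihilator_span_mk_X_pow hf hdeg i.isLt, jacAnn, if_neg (by omega)]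
  · rw [← pow_zero X, annihilator_span_mk_X_pow hf hdeg hd, jacAnn, if_pos rfl]

/-- For `f ∈ R = ℂ[x₁,…,xₙ]` homogeneous of degree `d > 0` and
`F = (f − zᵈ)z ∈ S = R[z]`, the quotient `S/Jac(F)` is the direct sum of the cyclic
`R`-modules generated by the cosets of `z⁰,…,z^{d−1}`; the `R`-annihilator of the
coset of `zⁱ` for `1 ≤ i ≤ d−1` is `Jac(f)`, and the `R`-annihilator of the coset of
`z⁰ = 1` is `f·Jac(f)`. -/
theorem stmt_9 {n d : ℕ} (hn : 2 ≤ n) (hd : 0 < d)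
    (f : MvPolynomial (Fin n) ℂ) (hf : f.IsHomogeneous d) (hdeg : f.totalDegree = d) :
    (⨆ i : Fin d, Submodule.span (MvPolynomial (Fin n) ℂ)
        {Ideal.Quotient.mk (jacF f) (Polynomial.X ^ (i : ℕ))}) = ⊤ ∧
    iSupIndep (fun i : Fin d => Submodule.span (MvPolynomial (Fin n) ℂ)
        {Ideal.Quotient.mk (jacF f) (Polynomial.X ^ (i : ℕ))}) ∧
    (∀ i : Fin d, 1 ≤ (i : ℕ) →
      (Submodule.span (MvPolynomial (Fin n) ℂ)
        {Ideal.Quotient.mk (jacF f) (Polynomial.X ^ (i : ℕ))}).annihilator = jacf f) ∧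
    (Submodule.span (MvPolynomial (Fin n) ℂ)
        {Ideal.Quotient.mk (jacF f) (1 : Polynomial (MvPolynomial (Fin n) ℂ))}).annihilator
      = Ideal.span {f} * jacf f :=
  stmt_9_general hd f hf hdeg
end

section
/- (Acyclicity Lemma of Peskine–Szpiro) Let A be a Noetherian local ring and 0 → Λ⁰ → Λ¹ → ⋯ → Λᵗ a complex of finitely generated A-modules with pd_A(Λⁱ) ≤ i for all i, such that every nonvanishing cohomology module Hⁱ of the complex with i < t has depth zero. If t ≤ depth(A), then Hⁱ = 0 for all i < t, i.e. the complex is a resolution of its terminal cohomology. -/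
universe u

/-- `PdLE R i M`: `M` has projective dimension at most `i` over `R`, encoded
recursively: `pd ≤ 0` means projective, and `pd ≤ i+1` means `M` is a quotient of a
finite free module whose kernel has `pd ≤ i`. -/
def PdLE (R : Type u) [CommRing R] :
    ℕ → ∀ (M : Type u) [AddCommGroup M] [Module R M], Prop
  | 0 => fun M _ _ => Module.Projective R M
  | (i + 1) => fun M _ _ => ∃ (m : ℕ) (φ : (Fin m → R) →ₗ[R] M),
      Function.Surjective φ ∧ PdLE R i ↥(LinearMap.ker φ)

variable {A : Type u} [CommRing A]

/-- Vanishing of the `i`-th cohomology of the complex `0 → Λ⁰ → Λ¹ → ⋯`. -/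
def CohVanishes (Λ : ℕ → Type u) [∀ i, AddCommGroup (Λ i)] [∀ i, Module A (Λ i)]
    (d : ∀ i, Λ i →ₗ[A] Λ (i + 1)) : ℕ → Prop
  | 0 => ∀ x : Λ 0, d 0 x = 0 → x = 0
  | (j + 1) => ∀ x : Λ (j + 1), d (j + 1) x = 0 → ∃ y : Λ j, d j y = x

/-- The `i`-th cohomology of the complex `0 → Λ⁰ → Λ¹ → ⋯` is nonzero of depth zero:
there is a nonzero cohomology class annihilated by the maximal ideal. -/
def CohDepthZero [IsLocalRing A] (Λ : ℕ → Type u) [∀ i, AddCommGroup (Λ i)]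
    [∀ i, Module A (Λ i)] (d : ∀ i, Λ i →ₗ[A] Λ (i + 1)) : ℕ → Prop
  | 0 => ∃ x : Λ 0, d 0 x = 0 ∧ x ≠ 0 ∧
      ∀ r ∈ IsLocalRing.maximalIdeal A, r • x = 0
  | (j + 1) => ∃ x : Λ (j + 1), d (j + 1) x = 0 ∧ (¬ ∃ y : Λ j, d j y = x) ∧
      ∀ r ∈ IsLocalRing.maximalIdeal A, ∃ y : Λ j, d j y = r • x

/-!
Let `Bⱼ ⊆ Λʲ⁺¹` be the image of `dⱼ`. Since `t ≤ depth A`, `pd Λʲ ≤ j` gives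
`depth Λʲ ≥ t - j`, by the depth lemma `depth Q ≥ min (depth K - 1, depth P)` for
`0 → K → P → Q → 0` applied along a finite free presentation. Argue by induction on `i`: when
`H⁰ = ⋯ = Hⁱ⁻¹ = 0`, the sequences `0 → Bⱼ₋₁ → Λʲ → Bⱼ → 0` are exact and the depth lemma gives
`depth Bⱼ ≥ t - j` for `j < i`. So for `0 < i < t`, `depth Bᵢ₋₁ ≥ 2` and `depth Λⁱ ≥ 1`, hence
`depth (Λⁱ / Bᵢ₋₁) ≥ 1`, and its submodule `Hⁱ` cannot have depth zero (for `i = 0` use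
`depth Λ⁰ ≥ 1`).

The depth lemma is proved with regular elements only. Its key input is
`depth (M/xM) ≥ depth M - 1` for every `M`-regular `x ∈ 𝔪`, obtained by swapping adjacent
elements of regular sequences, which is allowed in `𝔪` over a Noetherian local ring.
-/

open IsLocalRing RingTheory.Sequence Function LinearMap
open scoped Pointwise

section Exact

variable {K P Q : Type*} [AddCommGroup K] [Module A K]
  [AddCommGroup P] [Module A P] [AddCommGroup Q] [Module A Q]

theorem eq_zero_of_exact_of_isWeaklyRegular {f : K →ₗ[A] P} {g : P →ₗ[A] Q}
    (hf : Injective f) (hfg : Exact f g) (hg : Surjective g) {x y : A}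
    (hxP : IsSMulRegular P x) (hxy : IsWeaklyRegular K [x, y]) {q : Q}
    (hxq : x • q = 0) (hyq : y • q = 0) : q = 0 := by
  obtain ⟨-, hyK⟩ := (isWeaklyRegular_cons_iff K x [y]).mp hxy
  have hy : IsSMulRegular (QuotSMulTop x K) y := (isWeaklyRegular_singleton_iff _ y).mp hyK
  obtain ⟨p, rfl⟩ := hg q
  obtain ⟨k₁, hk₁⟩ := (hfg (x • p)).mp (by rw [map_smul, hxq])
  obtain ⟨k₂, hk₂⟩ := (hfg (y • p)).mp (by rw [map_smul, hyq])
  have hswap : y • k₁ = x • k₂ := hf (by rw [map_smul, map_smul, hk₁, hk₂, smul_comm])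
  obtain ⟨k₃, -, hk₃⟩ : k₁ ∈ x • (⊤ : Submodule A K) := by
    rw [← Submodule.Quotient.mk_eq_zero]
    refine hy.right_eq_zero_of_smul ?_
    rw [← Submodule.Quotient.mk_smul, hswap, Submodule.Quotient.mk_eq_zero]
    exact Submodule.smul_mem_pointwise_smul _ _ _ trivial
  have hp : f k₃ = p := hxP (show x • f k₃ = x • p by rw [← map_smul, ← hk₁, ← hk₃]; rfl)
  rw [← hp]
  exact hfg.apply_apply_eq_zero k₃

theorem isSMulRegular_prod_iff {M N : Type*} [AddCommGroup M] [Module A M] [AddCommGroup N]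
    [Module A N] {x : A} :
    IsSMulRegular (M × N) x ↔ IsSMulRegular M x ∧ IsSMulRegular N x :=
  ⟨fun h => ⟨h.of_injective _ (LinearMap.inl_injective (R := A)),
      h.of_injective _ (LinearMap.inr_injective (R := A))⟩,
    fun h _ _ hab => Prod.ext (h.1 (congrArg Prod.fst hab)) (h.2 (congrArg Prod.snd hab))⟩

end Exact

section Depth

variable [IsLocalRing A]

variable (A) in
/-- `depth M ≥ k`, witnessed by a weakly `M`-regular sequence of length `k` in the maximal
ideal; in particular the zero module has every depth. -/
def DepthGE (M : Type*) [AddCommGroup M] [Module A M] (k : ℕ) : Prop :=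
  ∃ rs : List A, rs.length = k ∧ (∀ r ∈ rs, r ∈ maximalIdeal A) ∧ IsWeaklyRegular M rs

variable {M N : Type*} [AddCommGroup M] [Module A M] [AddCommGroup N] [Module A N]

namespace DepthGE

theorem zero : DepthGE A M 0 :=
  ⟨[], rfl, by simp, .nil A M⟩

theorem mono {j k : ℕ} (h : DepthGE A M k) (hjk : j ≤ k) : DepthGE A M j := by
  obtain ⟨rs, hlen, hmem, hreg⟩ := h
  refine ⟨rs.take j, by simp [hlen, hjk], fun r hr => hmem r (List.take_subset j rs hr), ?_⟩
  rw [← List.take_append_drop j rs, isWeaklyRegular_append_iff] at hreg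
  exact hreg.1

theorem congr {k : ℕ} (e : M ≃ₗ[A] N) (h : DepthGE A M k) : DepthGE A N k := by
  obtain ⟨rs, hlen, hmem, hreg⟩ := h
  exact ⟨rs, hlen, hmem, (e.isWeaklyRegular_congr rs).mp hreg⟩

theorem cons {k : ℕ} {x : A} (hx : x ∈ maximalIdeal A) (hreg : IsSMulRegular M x)
    (h : DepthGE A (QuotSMulTop x M) k) : DepthGE A M (k + 1) := by
  obtain ⟨rs, hlen, hmem, hrs⟩ := h
  exact ⟨x :: rs, by simp [hlen], List.forall_mem_cons.mpr ⟨hx, hmem⟩, hrs.cons hreg⟩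

theorem of_flat {k : ℕ} [Module.Flat A M] (h : DepthGE A A k) : DepthGE A M k := by
  obtain ⟨rs, hlen, hmem, hreg⟩ := h
  exact ⟨rs, hlen, hmem,
    ((TensorProduct.rid A M).isWeaklyRegular_congr rs).mp hreg.isWeaklyRegular_lTensor⟩

theorem one_iff_exists_isSMulRegular :
    DepthGE A M 1 ↔ ∃ x ∈ maximalIdeal A, IsSMulRegular M x := by
  constructor
  · rintro ⟨_ | ⟨x, _ | _⟩, hlen, hmem, hreg⟩ <;> simp at hlen
    exact ⟨x, hmem x List.mem_cons_self, ((isWeaklyRegular_cons_iff M x []).mp hreg).1⟩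
  · rintro ⟨x, hx, hreg⟩
    exact zero.cons hx hreg

theorem eq_zero_of_forall_smul_eq_zero (h : DepthGE A M 1) {m : M}
    (hm : ∀ r ∈ maximalIdeal A, r • m = 0) : m = 0 := by
  obtain ⟨x, hx, hreg⟩ := one_iff_exists_isSMulRegular.mp h
  exact hreg.right_eq_zero_of_smul (hm x hx)

end DepthGE

variable [IsNoetherianRing A]

/-- Prime avoidance: if no element of `𝔪` is `M`-regular, then `𝔪` is an associated prime
of `M`. -/
theorem depthGE_one_iff [Module.Finite A M] :
    DepthGE A M 1 ↔ ∀ m : M, (∀ r ∈ maximalIdeal A, r • m = 0) → m = 0 := by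
  refine ⟨fun h _ => h.eq_zero_of_forall_smul_eq_zero, fun h => ?_⟩
  rw [DepthGE.one_iff_exists_isSMulRegular]
  by_contra! hnreg
  have hass : maximalIdeal A ∈ associatedPrimes A M := by
    refine (Ideal.subset_iUnion_iff_mem_of_isMaximal_of_finite (associatedPrimes.finite A M)
      ⊥ ⊥ (fun p hp _ _ => hp.isPrime) bot_ne_top bot_ne_top).mp fun x hx => ?_
    rw [biUnion_associatedPrimes_eq_compl_regular A M]
    exact hnreg x hx
  obtain ⟨hprime, m, hm⟩ := isAssociatedPrime_iff.mp hass
  have hm0 : m = 0 := h m fun r hr =>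
    (Submodule.mem_bot A).mp (Submodule.mem_colon_singleton.mp (hm ▸ hr))
  refine hprime.ne_top (Ideal.eq_top_iff_one _ |>.mpr ?_)
  rw [hm, hm0, Submodule.mem_colon_singleton, smul_zero]
  exact Submodule.zero_mem _

theorem isWeaklyRegular_swap [Module.Finite A M] {a b : A} {l : List A}
    (ha : a ∈ maximalIdeal A) (hb : b ∈ maximalIdeal A) (hl : ∀ r ∈ l, r ∈ maximalIdeal A)
    (h : IsWeaklyRegular M (a :: b :: l)) : IsWeaklyRegular M (b :: a :: l) :=
  isWeaklyRegular_of_perm_of_subset_maximalIdeal h (List.Perm.swap b a l)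
    (List.forall_mem_cons.mpr ⟨ha, List.forall_mem_cons.mpr ⟨hb, hl⟩⟩)

namespace DepthGE

theorem one_prod [Module.Finite A M] [Module.Finite A N] (hM : DepthGE A M 1)
    (hN : DepthGE A N 1) : DepthGE A (M × N) 1 := by
  rw [depthGE_one_iff] at hM hN ⊢
  intro ⟨m, n⟩ h
  simp only [Prod.smul_mk, Prod.mk_eq_zero] at h ⊢
  exact ⟨hM m fun r hr => (h r hr).1, hN n fun r hr => (h r hr).2⟩

theorem exists_isSMulRegular_and [Module.Finite A M] [Module.Finite A N] (hM : DepthGE A M 1)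
    (hN : DepthGE A N 1) :
    ∃ x ∈ maximalIdeal A, IsSMulRegular M x ∧ IsSMulRegular N x := by
  simpa only [isSMulRegular_prod_iff] using one_iff_exists_isSMulRegular.mp (hM.one_prod hN)

theorem quotSMulTop_one [Module.Finite A M] {x : A} (h : DepthGE A M 2)
    (hx : IsSMulRegular M x) : DepthGE A (QuotSMulTop x M) 1 := by
  obtain ⟨_ | ⟨y₁, _ | ⟨y₂, _ | _⟩⟩, hlen, hmem, hreg⟩ := h <;> simp at hlen
  rw [depthGE_one_iff]
  intro m hm
  exact eq_zero_of_exact_of_isWeaklyRegular (f := lsmul A M x) hx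
    (LinearMap.exact_lsmul_mkQ_smul_top M x) (Submodule.mkQ_surjective _)
    ((isWeaklyRegular_cons_iff M y₁ _).mp hreg).1 hreg (hm y₁ (hmem y₁ (by simp)))
    (hm y₂ (hmem y₂ (by simp)))

theorem quotSMulTop {k : ℕ} [Module.Finite A M] {x : A} (hx : x ∈ maximalIdeal A)
    (hreg : IsSMulRegular M x) (h : DepthGE A M (k + 1)) : DepthGE A (QuotSMulTop x M) k := by
  induction k generalizing M x with
  | zero => exact zero
  | succ k ih =>
    have hMx : DepthGE A (QuotSMulTop x M) 1 := (h.mono (by omega)).quotSMulTop_one hreg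
    obtain ⟨_ | ⟨y, ys⟩, hlen, hmem, hyys⟩ := h
    · simp at hlen
    obtain ⟨hy, hys⟩ := List.forall_mem_cons.mp hmem
    obtain ⟨hyreg, hysreg⟩ := (isWeaklyRegular_cons_iff M y ys).mp hyys
    have hMy : DepthGE A (QuotSMulTop y M) (k + 1) := ⟨ys, by simpa using hlen, hys, hysreg⟩
    -- For `z` regular on `M/xM` and `M/yM`, swapping turns `y, z, …` into `z, y, …` and
    -- `z, x, …` into `x, z, …`: apply the induction hypothesis to `M/yM`, then to `M/zM`.
    obtain ⟨z, hz, hzx, hzy⟩ := hMx.exists_isSMulRegular_and (hMy.mono (by omega))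
    obtain ⟨ws, hwlen, hwmem, hwreg⟩ := ih hz hzy hMy
    obtain ⟨hzreg, hyws⟩ := (isWeaklyRegular_cons_iff M z _).mp <|
      isWeaklyRegular_swap hy hz hwmem (.cons hyreg (.cons hzy hwreg))
    have hxz : IsSMulRegular (QuotSMulTop z M) x :=
      (isWeaklyRegular_singleton_iff _ x).mp ((isWeaklyRegular_cons_iff M z [x]).mp <|
        isWeaklyRegular_swap hx hz (by simp) (.cons hreg (.cons hzx (.nil A _)))).2
    obtain ⟨vs, hvlen, hvmem, hvreg⟩ := ih hx hxz
      ⟨y :: ws, by simp [hwlen], List.forall_mem_cons.mpr ⟨hy, hwmem⟩, hyws⟩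
    obtain ⟨-, hzvs⟩ := (isWeaklyRegular_cons_iff M x _).mp <|
      isWeaklyRegular_swap hz hx hvmem (.cons hzreg (.cons hxz hvreg))
    exact ⟨z :: vs, by simp [hvlen], List.forall_mem_cons.mpr ⟨hz, hvmem⟩, hzvs⟩

variable {K P Q : Type*} [AddCommGroup K] [Module A K] [AddCommGroup P] [Module A P]
  [AddCommGroup Q] [Module A Q] [Module.Finite A K] [Module.Finite A P] [Module.Finite A Q]
  {f : K →ₗ[A] P} {g : P →ₗ[A] Q}

theorem one_of_exact (hf : Injective f) (hfg : Exact f g) (hg : Surjective g)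
    (hK : DepthGE A K 2) (hP : DepthGE A P 1) : DepthGE A Q 1 := by
  obtain ⟨x, hx, hxP, hxK⟩ := hP.exists_isSMulRegular_and (hK.mono (by omega))
  obtain ⟨y, hy, hyK⟩ := one_iff_exists_isSMulRegular.mp (hK.quotSMulTop_one hxK)
  rw [depthGE_one_iff]
  exact fun q hq => eq_zero_of_exact_of_isWeaklyRegular hf hfg hg hxP
    (.cons hxK (.cons hyK (.nil A _))) (hq x hx) (hq y hy)

theorem of_exact {k : ℕ} (hf : Injective f) (hfg : Exact f g) (hg : Surjective g)
    (hK : DepthGE A K (k + 1)) (hP : DepthGE A P k) : DepthGE A Q k := by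
  induction k generalizing K P Q with
  | zero => exact zero
  | succ k ih =>
    have hQ : DepthGE A Q 1 := one_of_exact hf hfg hg (hK.mono (by omega)) (hP.mono (by omega))
    obtain ⟨x, hx, hxK, hxPQ⟩ := (hK.mono (by omega)).exists_isSMulRegular_and
      ((hP.mono (by omega)).one_prod hQ)
    obtain ⟨hxP, hxQ⟩ := isSMulRegular_prod_iff.mp hxPQ
    have hfx : Injective (QuotSMulTop.map x f) := by
      have := QuotSMulTop.map_first_exact_on_four_term_exact_of_isSMulRegular_last
        ((exact_zero_iff_injective PUnit f).mpr hf) hfg hxQ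
      rwa [map_zero, exact_zero_iff_injective] at this
    exact (ih hfx (QuotSMulTop.map_exact x hfg hg) (QuotSMulTop.map_surjective x hg)
      (hK.quotSMulTop hx hxK) (hP.quotSMulTop hx hxP)).cons hx hxQ

end DepthGE

end Depth

theorem DepthGE.of_pdLE [IsLocalRing A] [IsNoetherianRing A] {s : ℕ}
    (hA : DepthGE A A s) (n : ℕ) (M : Type u) [AddCommGroup M] [Module A M]
    [Module.Finite A M] (hM : PdLE A n M) (k : ℕ) (hnk : n + k ≤ s) : DepthGE A M k := by
  induction n generalizing M k with
  | zero =>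
    have : Module.Projective A M := hM
    exact (DepthGE.of_flat hA).mono (by omega)
  | succ n ih =>
    obtain ⟨m, φ, hφ, hker⟩ := hM
    exact DepthGE.of_exact (ker φ).injective_subtype (LinearMap.exact_subtype_ker_map φ) hφ
      (ih _ hker (k + 1) (by omega)) ((DepthGE.of_flat hA).mono (by omega))

section Complex

variable (Λ : ℕ → Type u) [∀ i, AddCommGroup (Λ i)]
  [∀ i, Module A (Λ i)] {d : ∀ i, Λ i →ₗ[A] Λ (i + 1)}

theorem ker_eq_range_of_cohVanishes (hcx : ∀ i, (d (i + 1)).comp (d i) = 0) {j : ℕ}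
    (h : CohVanishes Λ d (j + 1)) : ker (d (j + 1)) = range (d j) :=
  le_antisymm (fun x hx => h x hx) (range_le_ker_iff.mpr (hcx j))

theorem DepthGE.range_of_cohVanishes [IsLocalRing A] [IsNoetherianRing A]
    [∀ i, Module.Finite A (Λ i)] (hcx : ∀ i, (d (i + 1)).comp (d i) = 0) {s : ℕ}
    (hΛ : ∀ j ≤ s, DepthGE A (Λ j) (s - j)) (j : ℕ) (hjs : j ≤ s)
    (hH : ∀ i ≤ j, CohVanishes Λ d i) : DepthGE A (range (d j)) (s - j) := by
  induction j with
  | zero =>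
    have hinj : Injective (d 0) := (injective_iff_map_eq_zero _).mpr (hH 0 le_rfl)
    exact (hΛ 0 (by omega)).congr (LinearEquiv.ofInjective (d 0) hinj)
  | succ j ih =>
    have hexact : Exact (range (d j)).subtype (d (j + 1)).rangeRestrict := by
      rw [exact_iff, ker_rangeRestrict, Submodule.range_subtype,
        ker_eq_range_of_cohVanishes Λ hcx (hH (j + 1) le_rfl)]
    have hB : DepthGE A (range (d j)) (s - (j + 1) + 1) := by
      rw [show s - (j + 1) + 1 = s - j by omega]
      exact ih (by omega) fun i hi => hH i (by omega)
    exact DepthGE.of_exact (Submodule.injective_subtype _) hexact (surjective_rangeRestrict _)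
      hB (hΛ (j + 1) hjs)

variable [IsLocalRing A]

theorem not_cohDepthZero_zero (h : DepthGE A (Λ 0) 1) : ¬ CohDepthZero Λ d 0 :=
  fun ⟨_, _, hz, hm⟩ => hz (h.eq_zero_of_forall_smul_eq_zero hm)

theorem not_cohDepthZero_succ {j : ℕ} (h : DepthGE A (Λ (j + 1) ⧸ range (d j)) 1) :
    ¬ CohDepthZero Λ d (j + 1) := by
  rintro ⟨z, -, hz, hm⟩
  refine hz ((Submodule.Quotient.mk_eq_zero _).mp <|
    h.eq_zero_of_forall_smul_eq_zero fun r hr => ?_)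
  rw [← Submodule.Quotient.mk_smul, Submodule.Quotient.mk_eq_zero]
  exact hm r hr

end Complex

theorem stmt_14_general [IsLocalRing A] [IsNoetherianRing A] (t : ℕ)
    (Λ : ℕ → Type u) [∀ i, AddCommGroup (Λ i)] [∀ i, Module A (Λ i)]
    (d : ∀ i, Λ i →ₗ[A] Λ (i + 1))
    (hcx : ∀ i, (d (i + 1)).comp (d i) = 0)
    (hfg : ∀ i, Module.Finite A (Λ i))
    (hpd : ∀ i, i ≤ t → PdLE A i (Λ i))
    (hdz : ∀ i, i < t → CohVanishes (A := A) Λ d i ∨ CohDepthZero (A := A) Λ d i)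
    (hdepth : ∃ rs : List A, rs.length = t ∧
      (∀ r ∈ rs, r ∈ IsLocalRing.maximalIdeal A) ∧
      RingTheory.Sequence.IsRegular A rs) :
    ∀ i, i < t → CohVanishes (A := A) Λ d i := by
  obtain ⟨rs, hlen, hmem, hreg⟩ := hdepth
  have hΛ : ∀ j ≤ t, DepthGE A (Λ j) (t - j) := fun j hj =>
    DepthGE.of_pdLE ⟨rs, hlen, hmem, hreg.toIsWeaklyRegular⟩ j (Λ j) (hpd j hj) _ (by omega)
  intro i
  induction i using Nat.strong_induction_on with
  | _ i ih =>
    intro hi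
    refine (hdz i hi).resolve_right ?_
    cases i with
    | zero => exact not_cohDepthZero_zero Λ ((hΛ 0 (by omega)).mono (by omega))
    | succ j =>
      have hB : DepthGE A (range (d j)) 2 :=
        (DepthGE.range_of_cohVanishes Λ hcx hΛ j (by omega)
          fun i hij => ih i (by omega) (by omega)).mono (by omega)
      exact not_cohDepthZero_succ Λ <| DepthGE.one_of_exact (Submodule.injective_subtype _)
        (LinearMap.exact_subtype_mkQ _) (Submodule.mkQ_surjective _) hB
        ((hΛ (j + 1) (by omega)).mono (by omega))

/-- **Acyclicity Lemma of Peskine–Szpiro.**  Let `A` be a Noetherian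
local ring and `0 → Λ⁰ → Λ¹ → ⋯ → Λᵗ` a complex of finitely generated `A`-modules
with `pd_A(Λⁱ) ≤ i`, such that each nonvanishing cohomology module `Hⁱ` with `i < t`
has depth zero.  If `t ≤ depth A` (there is a regular sequence of length `t` in the
maximal ideal), then `Hⁱ = 0` for all `i < t`. -/
theorem stmt_14 [IsLocalRing A] [IsNoetherianRing A] (t : ℕ)
    (Λ : ℕ → Type u) [∀ i, AddCommGroup (Λ i)] [∀ i, Module A (Λ i)]
    (d : ∀ i, Λ i →ₗ[A] Λ (i + 1))
    (hcx : ∀ i, (d (i + 1)).comp (d i) = 0)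
    (hbdd : ∀ i, t < i → Subsingleton (Λ i))
    (hfg : ∀ i, Module.Finite A (Λ i))
    (hpd : ∀ i, i ≤ t → PdLE A i (Λ i))
    (hdz : ∀ i, i < t → CohVanishes (A := A) Λ d i ∨ CohDepthZero (A := A) Λ d i)
    (hdepth : ∃ rs : List A, rs.length = t ∧
      (∀ r ∈ rs, r ∈ IsLocalRing.maximalIdeal A) ∧
      RingTheory.Sequence.IsRegular A rs) :
    ∀ i, i < t → CohVanishes (A := A) Λ d i :=
  stmt_14_general t Λ d hcx hfg hpd hdz hdepth
end
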